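/- Let (A, ≤, →, S) be an implicative algebra with application ∘, let i = ⨅_{a ∈ A}(a → a), k = ⨅_{a,b}(a → (b → a)), s = ⨅_{a,b,c}((a → (b → c)) → ((a → b) → (a → c))), and suppose ν ∈ S satisfies ((ν ∘ a) ∘ b) ∘ c ≤ a ∘ (b ∘ c) for all a, b, c ∈ A. Let ι be an Alexandroff interior operator on A compatible with S (ι(S) = S ∩ A_ι) and such that i ∘ a ≤ ι(a) for all a ∈ A. Write a →_ι b = ι(a → b) and a ∘_ι b = c_ι(a ∘ b) for a, b ∈ A_ι, where c_ι(x) = ⨅ {d ∈ A_ι : x ≤ d}. Then: (1) the elements k_ι := ι((ν ∘ i) ∘ k) and s_ι := ι((ν ∘ ((ν ∘ i) ∘ (ν ∘ i))) ∘ s) lie in S ∩ A_ι and satisfy, for all a, b, c ∈ A_ι, k_ι ≤ a →_ι (b →_ι a) and s_ι ≤ a →_ι (b →_ι (c →_ι ((a ∘_ι c) ∘_ι (b ∘_ι c)))); and (2) the inclusion map A_ι → A is a computationally dense applicative morphism from the implicative algebra (A_ι, ≤, →_ι, S ∩ A_ι) to (A, ≤, →, S), a density witness being h = ι : S → S ∩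 A_ι with t = i. -/

import Mathlib

/-- The application map associated to an implication on a complete lattice. -/
def appOf {A : Type*} [CompleteLattice A] (imp : A → A → A) (a b : A) : A :=
  sInf {c | a ≤ imp b c}

/-- The set of fixed points (open elements) of an operator. -/
def fixedSet {A : Type*} (ι : A → A) : Set A := {x | ι x = x}

/-- The closure operator associated to an interior operator:
`c_ι(a) = ⨅ {b ∈ A_ι : a ≤ b}`. -/
def closureOf {A : Type*} [CompleteLattice A] (ι : A → A) (a : A) : A :=
  sInf {b | b ∈ fixedSet ι ∧ a ≤ b}

/-- The modified implication `a →_ι b = ι(a → b)`. -/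
def impIota {A : Type*} (imp : A → A → A) (ι : A → A) (a b : A) : A :=
  ι (imp a b)

/-- The modified application `a ∘_ι b = c_ι(a ∘ b)`. -/
def appIota {A : Type*} [CompleteLattice A] (imp : A → A → A) (ι : A → A) (a b : A) : A :=
  closureOf ι (appOf imp a b)

/-!
A realiser of `a →_ι b = ι (a → b)` has to deliver its output inside `ι`. The element `ν ∘ i`
does this: by the associativity law for `ν` and `i ∘ a ≤ ι a`, `((ν ∘ i) ∘ x) ∘ a ≤ ι (x ∘ a)`.
Prefixing `k` and `s` with one copy of `ν ∘ i` per argument that passes through `ι` yields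
`k_ι` and `s_ι`. Since `ι` is Alexandroff, `A_ι` is closed under meets, and `i ≤ ι b → b`
gives the density of the inclusion.
-/

structure IsImplicativeStructure {A : Type*} [CompleteLattice A] (imp : A → A → A) : Prop where
  mono : ∀ a a' b b' : A, a' ≤ a → b ≤ b' → imp a b ≤ imp a' b'
  imp_sInf : ∀ (a : A) (B : Set A), imp a (sInf B) = ⨅ b ∈ B, imp a b

def combI {A : Type*} [CompleteLattice A] (imp : A → A → A) : A :=
  ⨅ x : A, imp x x

def combK {A : Type*} [CompleteLattice A] (imp : A → A → A) : A :=
  ⨅ (x : A) (y : A), imp x (imp y x)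

def combS {A : Type*} [CompleteLattice A] (imp : A → A → A) : A :=
  ⨅ (x : A) (y : A) (z : A), imp (imp x (imp y z)) (imp (imp x y) (imp x z))

structure IsSeparator {A : Type*} [CompleteLattice A] (imp : A → A → A) (S : Set A) : Prop where
  mem_of_le : ∀ a b : A, a ∈ S → a ≤ b → b ∈ S
  mem_of_imp_mem : ∀ a b : A, imp a b ∈ S → a ∈ S → b ∈ S
  combK_mem : combK imp ∈ S
  combS_mem : combS imp ∈ S

section Application

variable {A : Type*} [CompleteLattice A] {imp : A → A → A}

theorem appOf_le_of_le_imp {a b c : A} (h : a ≤ imp b c) : appOf imp a b ≤ c :=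
  sInf_le h

theorem IsImplicativeStructure.le_imp_appOf (h : IsImplicativeStructure imp) (a b : A) :
    a ≤ imp b (appOf imp a b) := by
  rw [appOf, h.imp_sInf]
  exact le_iInf₂ fun _ hc => hc

theorem IsImplicativeStructure.le_imp_of_appOf_le (h : IsImplicativeStructure imp)
    {a b c : A} (hc : appOf imp a b ≤ c) : a ≤ imp b c :=
  (h.le_imp_appOf a b).trans (h.mono _ _ _ _ le_rfl hc)

theorem IsImplicativeStructure.appOf_le (h : IsImplicativeStructure imp) {a b p q : A}
    (ha : a ≤ imp p q) (hb : b ≤ p) : appOf imp a b ≤ q :=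
  appOf_le_of_le_imp (ha.trans (h.mono _ _ _ _ hb le_rfl))

theorem IsImplicativeStructure.appOf_mono (h : IsImplicativeStructure imp) {a a' b b' : A}
    (ha : a ≤ a') (hb : b ≤ b') : appOf imp a b ≤ appOf imp a' b' :=
  h.appOf_le (ha.trans (h.le_imp_appOf a' b')) hb

theorem IsSeparator.appOf_mem {S : Set A} (hS : IsSeparator imp S)
    (h : IsImplicativeStructure imp) {a b : A} (ha : a ∈ S) (hb : b ∈ S) :
    appOf imp a b ∈ S :=
  hS.mem_of_imp_mem _ _ (hS.mem_of_le _ _ ha (h.le_imp_appOf a b)) hb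

end Application

section Combinators

variable {A : Type*} [CompleteLattice A] {imp : A → A → A}

theorem combI_le (a : A) : combI imp ≤ imp a a :=
  iInf_le _ a

theorem combK_le (a b : A) : combK imp ≤ imp a (imp b a) :=
  (iInf_le _ a).trans (iInf_le _ b)

theorem combS_le (a b c : A) :
    combS imp ≤ imp (imp a (imp b c)) (imp (imp a b) (imp a c)) :=
  (iInf_le _ a).trans ((iInf_le _ b).trans (iInf_le _ c))

theorem IsImplicativeStructure.combI_le_imp (h : IsImplicativeStructure imp) {a b : A}
    (hab : a ≤ b) : combI imp ≤ imp a b :=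
  (combI_le a).trans (h.mono _ _ _ _ le_rfl hab)

theorem IsImplicativeStructure.appOf_appOf_combS_le (h : IsImplicativeStructure imp)
    (a b c : A) :
    appOf imp (appOf imp (combS imp) a) b ≤
      imp c (appOf imp (appOf imp a c) (appOf imp b c)) := by
  have ha : a ≤ imp c (imp (appOf imp b c) (appOf imp (appOf imp a c) (appOf imp b c))) :=
    (h.le_imp_appOf a c).trans (h.mono _ _ _ _ le_rfl (h.le_imp_appOf _ _))
  exact h.appOf_le (h.appOf_le (combS_le _ _ _) ha) (h.le_imp_appOf b c)

/-- `i` is realised as `s k k`. -/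
theorem IsSeparator.combI_mem {S : Set A} (hS : IsSeparator imp S)
    (h : IsImplicativeStructure imp) : combI imp ∈ S := by
  refine hS.mem_of_le _ _ (hS.appOf_mem h (hS.appOf_mem h hS.combS_mem hS.combK_mem)
    hS.combK_mem) (le_iInf fun x => ?_)
  exact h.appOf_le (h.appOf_le (combS_le x (imp x x) x) (combK_le x (imp x x))) (combK_le x x)

end Combinators

section Interior

variable {A : Type*} [CompleteLattice A] {imp : A → A → A} {ι : A → A}

theorem le_closureOf (a : A) : a ≤ closureOf ι a :=
  le_sInf fun _ hb => hb.2

theorem sInf_mem_fixedSet (halex : ∀ B : Set A, ι (sInf B) = ⨅ b ∈ B, ι b) {C : Set A}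
    (hC : C ⊆ fixedSet ι) : sInf C ∈ fixedSet ι := by
  change ι (sInf C) = sInf C
  rw [halex, sInf_eq_iInf]
  exact iInf_congr fun b => iInf_congr fun hb => hC hb

theorem IsImplicativeStructure.interior_le_impIota (h : IsImplicativeStructure imp)
    (hmonoι : Monotone ι) {x a y : A} (hxy : appOf imp x a ≤ y) :
    ι x ≤ impIota imp ι a y :=
  hmonoι (h.le_imp_of_appOf_le hxy)

theorem appOf_appOf_nu_combI_le {ν : A}
    (hassoc : ∀ a b c : A,
      appOf imp (appOf imp (appOf imp ν a) b) c ≤ appOf imp a (appOf imp b c))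
    (hi : ∀ a : A, appOf imp (combI imp) a ≤ ι a) (x a : A) :
    appOf imp (appOf imp (appOf imp ν (combI imp)) x) a ≤ ι (appOf imp x a) :=
  (hassoc _ _ _).trans (hi _)

theorem IsImplicativeStructure.interior_combK_le (h : IsImplicativeStructure imp)
    (hmonoι : Monotone ι) {ν : A}
    (hassoc : ∀ a b c : A,
      appOf imp (appOf imp (appOf imp ν a) b) c ≤ appOf imp a (appOf imp b c))
    (hi : ∀ a : A, appOf imp (combI imp) a ≤ ι a) (a b : A) :
    ι (appOf imp (appOf imp ν (combI imp)) (combK imp)) ≤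
      impIota imp ι a (impIota imp ι b a) :=
  h.interior_le_impIota hmonoι <| (appOf_appOf_nu_combI_le hassoc hi _ a).trans <|
    hmonoι (appOf_le_of_le_imp (combK_le a b))

theorem IsImplicativeStructure.interior_combS_le (h : IsImplicativeStructure imp)
    (hmonoι : Monotone ι) {ν : A}
    (hassoc : ∀ a b c : A,
      appOf imp (appOf imp (appOf imp ν a) b) c ≤ appOf imp a (appOf imp b c))
    (hi : ∀ a : A, appOf imp (combI imp) a ≤ ι a) (a b c : A) :
    ι (appOf imp (appOf imp ν (appOf imp (appOf imp ν (combI imp))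
        (appOf imp ν (combI imp)))) (combS imp)) ≤
      impIota imp ι a (impIota imp ι b (impIota imp ι c
        (appIota imp ι (appIota imp ι a c) (appIota imp ι b c)))) := by
  set j := appOf imp ν (combI imp)
  have hsab : appOf imp (appOf imp (combS imp) a) b ≤
      imp c (appIota imp ι (appIota imp ι a c) (appIota imp ι b c)) :=
    (h.appOf_appOf_combS_le a b c).trans <| h.mono _ _ _ _ le_rfl <|
      (h.appOf_mono (le_closureOf _) (le_closureOf _)).trans (le_closureOf _)
  have hjsa : ι (appOf imp j (appOf imp (combS imp) a)) ≤ impIota imp ι b (impIota imp ι c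
      (appIota imp ι (appIota imp ι a c) (appIota imp ι b c))) :=
    h.interior_le_impIota hmonoι ((appOf_appOf_nu_combI_le hassoc hi _ b).trans (hmonoι hsab))
  refine h.interior_le_impIota hmonoι ?_
  calc appOf imp (appOf imp (appOf imp ν (appOf imp j j)) (combS imp)) a
      ≤ appOf imp (appOf imp j j) (appOf imp (combS imp) a) := hassoc _ _ _
    _ ≤ ι (appOf imp j (appOf imp (combS imp) a)) := appOf_appOf_nu_combI_le hassoc hi _ _
    _ ≤ _ := hjsa

end Interior

theorem change_implicative_algebra_general {A : Type*} [CompleteLattice A]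
    (imp : A → A → A)
    (hmono : ∀ a a' b b' : A, a' ≤ a → b ≤ b' → imp a b ≤ imp a' b')
    (hinf : ∀ (a : A) (B : Set A), imp a (sInf B) = ⨅ b ∈ B, imp a b)
    (S : Set A)
    (Sup : ∀ a b : A, a ∈ S → a ≤ b → b ∈ S)
    (Smp : ∀ a b : A, imp a b ∈ S → a ∈ S → b ∈ S)
    (Sk : (⨅ (x : A) (y : A), imp x (imp y x)) ∈ S)
    (Ss : (⨅ (x : A) (y : A) (z : A),
        imp (imp x (imp y z)) (imp (imp x y) (imp x z))) ∈ S)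
    (ν : A) (hν : ν ∈ S)
    (hassoc : ∀ a b c : A,
      appOf imp (appOf imp (appOf imp ν a) b) c ≤ appOf imp a (appOf imp b c))
    (ι : A → A)
    (hdefl : ∀ a, ι a ≤ a)
    (hmonoι : ∀ a b : A, a ≤ b → ι a ≤ ι b)
    (halex : ∀ B : Set A, ι (sInf B) = ⨅ b ∈ B, ι b)
    (hcompatS : ι '' S = S ∩ fixedSet ι)
    (hi : ∀ a : A, appOf imp (⨅ x : A, imp x x) a ≤ ι a) :
    -- (1) the combinators k_ι and s_ι
    (ι (appOf imp (appOf imp ν (⨅ x : A, imp x x)) (⨅ (x : A) (y : A), imp x (imp y x)))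
        ∈ S ∩ fixedSet ι) ∧
    (ι (appOf imp (appOf imp ν
          (appOf imp (appOf imp ν (⨅ x : A, imp x x)) (appOf imp ν (⨅ x : A, imp x x))))
        (⨅ (x : A) (y : A) (z : A),
          imp (imp x (imp y z)) (imp (imp x y) (imp x z)))) ∈ S ∩ fixedSet ι) ∧
    (∀ a b : A, a ∈ fixedSet ι → b ∈ fixedSet ι →
      ι (appOf imp (appOf imp ν (⨅ x : A, imp x x)) (⨅ (x : A) (y : A), imp x (imp y x)))
        ≤ impIota imp ι a (impIota imp ι b a)) ∧
    (∀ a b c : A, a ∈ fixedSet ι → b ∈ fixedSet ι → c ∈ fixedSet ι →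
      ι (appOf imp (appOf imp ν
          (appOf imp (appOf imp ν (⨅ x : A, imp x x)) (appOf imp ν (⨅ x : A, imp x x))))
        (⨅ (x : A) (y : A) (z : A),
          imp (imp x (imp y z)) (imp (imp x y) (imp x z))))
        ≤ impIota imp ι a (impIota imp ι b (impIota imp ι c
            (appIota imp ι (appIota imp ι a c) (appIota imp ι b c))))) ∧
    -- (2) the inclusion A_ι → A is a computationally dense applicative morphism
    (∀ a : A, a ∈ S ∩ fixedSet ι → a ∈ S) ∧
    (∃ r ∈ S, ∀ a a' : A, a ∈ fixedSet ι → a' ∈ fixedSet ι →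
        impIota imp ι a a' ∈ S ∩ fixedSet ι →
        r ≤ imp (impIota imp ι a a') (imp a a')) ∧
    (∀ C : Set A, C ⊆ fixedSet ι → sInf C ∈ fixedSet ι) ∧
    -- density witness h = ι, t = i
    (∀ b ∈ S, ι b ∈ S ∩ fixedSet ι) ∧
    ((⨅ x : A, imp x x) ∈ S ∧ ∀ b ∈ S, (⨅ x : A, imp x x) ≤ imp (ι b) b) := by
  
  have himp : IsImplicativeStructure imp := ⟨hmono, hinf⟩
  have hS : IsSeparator imp S := ⟨Sup, Smp, Sk, Ss⟩
  have hiS : combI imp ∈ S := hS.combI_mem himp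
  have interior_mem : ∀ x ∈ S, ι x ∈ S ∩ fixedSet ι := fun x hx =>
    hcompatS ▸ Set.mem_image_of_mem ι hx
  have hj : appOf imp ν (combI imp) ∈ S := hS.appOf_mem himp hν hiS
  refine ⟨interior_mem _ (hS.appOf_mem himp hj Sk),
    interior_mem _ (hS.appOf_mem himp (hS.appOf_mem himp hν (hS.appOf_mem himp hj hj)) Ss),
    fun a b _ _ => himp.interior_combK_le hmonoι hassoc hi a b,
    fun a b c _ _ _ => himp.interior_combS_le hmonoι hassoc hi a b c,
    fun a ha => ha.1,
    ⟨combI imp, hiS, fun a a' _ _ _ => himp.combI_le_imp (hdefl _)⟩,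
    fun C hC => sInf_mem_fixedSet halex hC,
    interior_mem, hiS, fun b _ => himp.combI_le_imp (hdefl b)⟩

/-- Changing an implicative algebra by a compatible Alexandroff interior operator:
`A_ι` carries combinators `k_ι = ι((ν∘i)∘k)` and `s_ι = ι((ν∘((ν∘i)∘(ν∘i)))∘s)` in
`S ∩ A_ι`, and the inclusion `A_ι → A` is a computationally dense applicative
morphism with density witness `h = ι` and `t = i`. -/
theorem change_implicative_algebra {A : Type*} [CompleteLattice A]
    (imp : A → A → A)
    (hmono : ∀ a a' b b' : A, a' ≤ a → b ≤ b' → imp a b ≤ imp a' b')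
    (hinf : ∀ (a : A) (B : Set A), imp a (sInf B) = ⨅ b ∈ B, imp a b)
    (S : Set A)
    (Sup : ∀ a b : A, a ∈ S → a ≤ b → b ∈ S)
    (Smp : ∀ a b : A, imp a b ∈ S → a ∈ S → b ∈ S)
    (Sk : (⨅ (x : A) (y : A), imp x (imp y x)) ∈ S)
    (Ss : (⨅ (x : A) (y : A) (z : A),
        imp (imp x (imp y z)) (imp (imp x y) (imp x z))) ∈ S)
    (ν : A) (hν : ν ∈ S)
    (hassoc : ∀ a b c : A,
      appOf imp (appOf imp (appOf imp ν a) b) c ≤ appOf imp a (appOf imp b c))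
    (ι : A → A)
    (hdefl : ∀ a, ι a ≤ a) (hidem : ∀ a, ι (ι a) = ι a)
    (hmonoι : ∀ a b : A, a ≤ b → ι a ≤ ι b)
    (halex : ∀ B : Set A, ι (sInf B) = ⨅ b ∈ B, ι b)
    (hcompatS : ι '' S = S ∩ fixedSet ι)
    (hi : ∀ a : A, appOf imp (⨅ x : A, imp x x) a ≤ ι a) :
    -- (1) the combinators k_ι and s_ι
    (ι (appOf imp (appOf imp ν (⨅ x : A, imp x x)) (⨅ (x : A) (y : A), imp x (imp y x)))
        ∈ S ∩ fixedSet ι) ∧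
    (ι (appOf imp (appOf imp ν
          (appOf imp (appOf imp ν (⨅ x : A, imp x x)) (appOf imp ν (⨅ x : A, imp x x))))
        (⨅ (x : A) (y : A) (z : A),
          imp (imp x (imp y z)) (imp (imp x y) (imp x z)))) ∈ S ∩ fixedSet ι) ∧
    (∀ a b : A, a ∈ fixedSet ι → b ∈ fixedSet ι →
      ι (appOf imp (appOf imp ν (⨅ x : A, imp x x)) (⨅ (x : A) (y : A), imp x (imp y x)))
        ≤ impIota imp ι a (impIota imp ι b a)) ∧
    (∀ a b c : A, a ∈ fixedSet ι → b ∈ fixedSet ι → c ∈ fixedSet ι →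
      ι (appOf imp (appOf imp ν
          (appOf imp (appOf imp ν (⨅ x : A, imp x x)) (appOf imp ν (⨅ x : A, imp x x))))
        (⨅ (x : A) (y : A) (z : A),
          imp (imp x (imp y z)) (imp (imp x y) (imp x z))))
        ≤ impIota imp ι a (impIota imp ι b (impIota imp ι c
            (appIota imp ι (appIota imp ι a c) (appIota imp ι b c))))) ∧
    -- (2) the inclusion A_ι → A is a computationally dense applicative morphism
    (∀ a : A, a ∈ S ∩ fixedSet ι → a ∈ S) ∧
    (∃ r ∈ S, ∀ a a' : A, a ∈ fixedSet ι → a' ∈ fixedSet ι →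
        impIota imp ι a a' ∈ S ∩ fixedSet ι →
        r ≤ imp (impIota imp ι a a') (imp a a')) ∧
    (∀ C : Set A, C ⊆ fixedSet ι → sInf C ∈ fixedSet ι) ∧
    -- density witness h = ι, t = i
    (∀ b ∈ S, ι b ∈ S ∩ fixedSet ι) ∧
    ((⨅ x : A, imp x x) ∈ S ∧ ∀ b ∈ S, (⨅ x : A, imp x x) ≤ imp (ι b) b) :=
  change_implicative_algebra_general imp hmono hinf S Sup Smp Sk Ss ν hν hassoc ι hdefl hmonoι halex
    hcompatS hi
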